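/- arXiv:2309.12907 — 4 statements merged into one kernel-verified Lean document; each statement's English description precedes it below -/
import Mathlib

section
/- For single-qubit operators M_k = e^{-iπk/N}|0⟩⟨1| + e^{iπk/N}|1⟩⟨0| (k = 0,…,N−1), the anti-diagonal operator A_N = |0⟩⟨1|^{⊗N} + |1⟩⟨0|^{⊗N} satisfies A_N = (1/N) Σ_{k=0}^{N−1} (−1)^k M_k^{⊗N}. -/
open Complex Matrix BigOperators Real

noncomputable section

/-- Tensor product of single-qubit operators, as a matrix on `(ℂ²)^{⊗N}`. -/
def tp {N : ℕ} (M : Fin N → Matrix (Fin 2) (Fin 2) ℂ) :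
    Matrix (Fin N → Fin 2) (Fin N → Fin 2) ℂ :=
  Matrix.of fun f g => ∏ k, M k (f k) (g k)

/-- `|0⟩⟨1|` -/
def ket01 : Matrix (Fin 2) (Fin 2) ℂ := !![0, 1; 0, 0]

/-- `|1⟩⟨0|` -/
def ket10 : Matrix (Fin 2) (Fin 2) ℂ := !![0, 0; 1, 0]

lemma fin2_eq (a : Fin 2) : a = 0 ∨ a = 1 := by fin_cases a <;> simp

lemma ket01_diag (a : Fin 2) : ket01 a a = 0 := by fin_cases a <;> simp [ket01]
lemma ket10_diag (a : Fin 2) : ket10 a a = 0 := by fin_cases a <;> simp [ket10]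

lemma ket01_off (a b : Fin 2) (h : a ≠ b) : ket01 a b = if a = 0 then 1 else 0 := by
  fin_cases a <;> fin_cases b <;> simp_all [ket01]

lemma ket10_off (a b : Fin 2) (h : a ≠ b) : ket10 a b = if a = 0 then 0 else 1 := by
  fin_cases a <;> fin_cases b <;> simp_all [ket10]

/-- for `M_k = e^{-iπk/N}|0⟩⟨1| + e^{iπk/N}|1⟩⟨0|`, the anti-diagonal
operator `A_N = |0⟩⟨1|^{⊗N} + |1⟩⟨0|^{⊗N}` satisfies
`A_N = (1/N) ∑_{k<N} (-1)^k M_k^{⊗N}`. -/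
theorem antidiagonal_decomposition (N : ℕ) (hN : 0 < N)
    (M : Fin N → Matrix (Fin 2) (Fin 2) ℂ)
    (hM : ∀ k : Fin N,
      M k = Complex.exp (-(↑π * (k : ℕ) / N) * Complex.I) • ket01
          + Complex.exp ((↑π * (k : ℕ) / N) * Complex.I) • ket10) :
    tp (fun _ : Fin N => ket01) + tp (fun _ : Fin N => ket10)
      = (1 / N : ℂ) • ∑ k : Fin N, ((-1 : ℂ)) ^ (k : ℕ) • tp (fun _ : Fin N => M k) := by
  have hNC : (N : ℂ) ≠ 0 := Nat.cast_ne_zero.mpr hN.ne'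
  have hMo : ∀ (k : Fin N) (a b : Fin 2), a ≠ b →
      M k a b = if a = 0 then Complex.exp (-(↑π * (k : ℕ) / N) * Complex.I)
                else Complex.exp ((↑π * (k : ℕ) / N) * Complex.I) := by
    intro k a b hab
    rw [hM k]
    simp only [Matrix.add_apply, Matrix.smul_apply, smul_eq_mul,
      ket01_off a b hab, ket10_off a b hab]
    rcases fin2_eq a with h | h <;> simp [h]
  ext f g
  simp only [Matrix.add_apply, Matrix.smul_apply, Matrix.sum_apply, tp, Matrix.of_apply,
    smul_eq_mul]
  by_cases hfg : ∀ j, f j ≠ g j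
  · -- all entries off-diagonal
    set m1 : ℕ := (Finset.univ.filter fun j => f j = 1).card with hm1
    set m0 : ℕ := (Finset.univ.filter fun j => f j = 0).card with hm0
    have hfilter : (Finset.univ.filter fun j => ¬ f j = 0)
        = (Finset.univ.filter fun j : Fin N => f j = 1) := by
      apply Finset.filter_congr
      intro j _
      rcases fin2_eq (f j) with h | h <;> simp [h]
    have hsum : m0 + m1 = N := by
      rw [hm0, hm1, ← hfilter, Finset.card_filter_add_card_filter_not]
      simp
    have hcC : (m0 : ℂ) + m1 = N := by exact_mod_cast hsum
    set ω : ℂ := Complex.exp (2 * ↑π * m1 / N * Complex.I) with hω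
    have hterm : ∀ k : Fin N, (-1 : ℂ) ^ (k : ℕ) * ∏ j, M k (f j) (g j) = ω ^ (k : ℕ) := by
      intro k
      have hp : ∏ j, M k (f j) (g j)
          = Complex.exp (-(↑π * (k : ℕ) / N) * Complex.I) ^ m0
            * Complex.exp ((↑π * (k : ℕ) / N) * Complex.I) ^ m1 := by
        rw [Finset.prod_congr rfl fun j _ => hMo k _ _ (hfg j), Finset.prod_ite,
          Finset.prod_const, Finset.prod_const, hfilter]
      rw [hp, show (-1 : ℂ) = Complex.exp (↑π * Complex.I) from (Complex.exp_pi_mul_I).symm,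
        hω, ← Complex.exp_nat_mul, ← Complex.exp_nat_mul, ← Complex.exp_nat_mul,
        ← Complex.exp_nat_mul, ← Complex.exp_add, ← Complex.exp_add]
      congr 1
      linear_combination (-(((k : ℕ) : ℂ) * ↑π * Complex.I / (N : ℂ))) * hcC
        - (((k : ℕ) : ℂ) * ↑π * Complex.I) * (mul_inv_cancel₀ hNC)
    have hS : ∑ k : Fin N, (-1 : ℂ) ^ (k : ℕ) * ∏ j, M k (f j) (g j)
        = ∑ i ∈ Finset.range N, ω ^ i := by
      rw [Finset.sum_congr rfl fun k _ => hterm k]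
      exact Fin.sum_univ_eq_sum_range (fun i => ω ^ i) N
    rw [hS]
    by_cases h0 : m1 = 0
    · have hf0 : ∀ j, f j = 0 := by
        intro j
        rcases fin2_eq (f j) with h | h
        · exact h
        · exfalso
          have : j ∈ Finset.univ.filter fun j : Fin N => f j = 1 :=
            Finset.mem_filter.mpr ⟨Finset.mem_univ j, h⟩
          rw [← hm1] at *
          have := Finset.card_pos.mpr ⟨j, this⟩
          omega
      have h01 : ∏ j, ket01 (f j) (g j) = 1 := by
        apply Finset.prod_eq_one
        intro j _
        rw [ket01_off _ _ (hfg j), if_pos (hf0 j)]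
      have h10 : ∏ j, ket10 (f j) (g j) = 0 := by
        apply Finset.prod_eq_zero (Finset.mem_univ (⟨0, hN⟩ : Fin N))
        rw [ket10_off _ _ (hfg _), if_pos (hf0 _)]
      have hω1 : ω = 1 := by
        rw [hω, h0]
        norm_num
      rw [h01, h10, hω1]
      simp [Finset.sum_const, hNC]
    · by_cases hNn : m1 = N
      · have hf1 : ∀ j, f j = 1 := by
          intro j
          have huniv : (Finset.univ.filter fun j : Fin N => f j = 1) = Finset.univ := by
            apply Finset.eq_univ_of_card
            rw [← hm1, hNn]
            simp
          have : j ∈ Finset.univ.filter fun j : Fin N => f j = 1 := by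
            rw [huniv]; exact Finset.mem_univ j
          exact (Finset.mem_filter.mp this).2
        have h01 : ∏ j, ket01 (f j) (g j) = 0 := by
          apply Finset.prod_eq_zero (Finset.mem_univ (⟨0, hN⟩ : Fin N))
          rw [ket01_off _ _ (hfg _), if_neg (by rw [hf1]; decide)]
        have h10 : ∏ j, ket10 (f j) (g j) = 1 := by
          apply Finset.prod_eq_one
          intro j _
          rw [ket10_off _ _ (hfg j), if_neg (by rw [hf1]; decide)]
        have hω1 : ω = 1 := by
          rw [hω, hNn]
          rw [show (2 * ↑π * (N : ℂ) / N * Complex.I) = 2 * ↑π * Complex.I by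
            field_simp]
          exact Complex.exp_two_pi_mul_I
        rw [h01, h10, hω1]
        simp [Finset.sum_const, hNC]
      · -- 0 < m1 < N
        have hm1le : m1 ≤ N := by omega
        have hωN : ω ^ N = 1 := by
          rw [hω, ← Complex.exp_nat_mul,
            show (N : ℂ) * (2 * ↑π * m1 / N * Complex.I) = (m1 : ℂ) * (2 * ↑π * Complex.I) by
              field_simp]
          exact_mod_cast Complex.exp_int_mul_two_pi_mul_I (m1 : ℤ)
        have hωne : ω ≠ 1 := by
          intro h
          rw [hω, Complex.exp_eq_one_iff] at h
          obtain ⟨n, hn⟩ := h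
          have hπ : (↑π : ℂ) ≠ 0 := Complex.ofReal_ne_zero.mpr Real.pi_ne_zero
          have hI : Complex.I ≠ 0 := Complex.I_ne_zero
          rw [div_mul_eq_mul_div, div_eq_iff hNC] at hn
          have h2 : (2 : ℂ) * ↑π * Complex.I ≠ 0 :=
            mul_ne_zero (mul_ne_zero two_ne_zero hπ) hI
          have hzc : (m1 : ℂ) = (n : ℂ) * N := by
            apply mul_left_cancel₀ h2
            linear_combination hn
          have hz : (m1 : ℤ) = n * N := by exact_mod_cast hzc
          have hdvd : N ∣ m1 := by
            have : (N : ℤ) ∣ (m1 : ℤ) := ⟨n, by linarith⟩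
            exact_mod_cast this
          have := Nat.le_of_dvd (Nat.pos_of_ne_zero h0) hdvd
          omega
        have hgeo : ∑ i ∈ Finset.range N, ω ^ i = 0 := by
          rw [geom_sum_eq hωne, hωN]
          simp
        have hex1 : ∃ j, f j = 1 := by
          have : (Finset.univ.filter fun j : Fin N => f j = 1).Nonempty :=
            Finset.card_pos.mp (by omega)
          obtain ⟨j, hj⟩ := this
          exact ⟨j, (Finset.mem_filter.mp hj).2⟩
        have hex0 : ∃ j, f j = 0 := by
          have : (Finset.univ.filter fun j : Fin N => f j = 0).Nonempty :=
            Finset.card_pos.mp (by omega)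
          obtain ⟨j, hj⟩ := this
          exact ⟨j, (Finset.mem_filter.mp hj).2⟩
        obtain ⟨j1, hj1⟩ := hex1
        obtain ⟨j0, hj0⟩ := hex0
        have h01 : ∏ j, ket01 (f j) (g j) = 0 := by
          apply Finset.prod_eq_zero (Finset.mem_univ j1)
          rw [ket01_off _ _ (hfg _), if_neg (by rw [hj1]; decide)]
        have h10 : ∏ j, ket10 (f j) (g j) = 0 := by
          apply Finset.prod_eq_zero (Finset.mem_univ j0)
          rw [ket10_off _ _ (hfg _), if_pos hj0]
        rw [h01, h10, hgeo]
        simp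
  · push_neg at hfg
    obtain ⟨j, hj⟩ := hfg
    have h01 : ∏ j, ket01 (f j) (g j) = 0 :=
      Finset.prod_eq_zero (Finset.mem_univ j) (by rw [hj]; exact ket01_diag _)
    have h10 : ∏ j, ket10 (f j) (g j) = 0 :=
      Finset.prod_eq_zero (Finset.mem_univ j) (by rw [hj]; exact ket10_diag _)
    have hMk : ∀ k : Fin N, ∏ j, M k (f j) (g j) = 0 := by
      intro k
      apply Finset.prod_eq_zero (Finset.mem_univ j)
      rw [hM k, hj]
      simp [Matrix.add_apply, Matrix.smul_apply, ket01_diag, ket10_diag]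
    rw [h01, h10, Finset.sum_eq_zero fun k _ => by rw [hMk k, mul_zero]]
    simp
end
end

section
/- If all parties measure X = σ_x and Y = σ_y, the N-qubit GHZ-state fidelity satisfies F_N ≥ ⟨B_N⟩/2^N for any state ρ, where B_N = [(σ_x + iσ_y)^{⊗N} + (σ_x − iσ_y)^{⊗N}]/2 is the Mermin–Bell operator. -/
open Complex Matrix BigOperators Real
open scoped ComplexOrder

noncomputable section

/-- Pauli `σ_x`. -/
def σx : Matrix (Fin 2) (Fin 2) ℂ := !![0, 1; 1, 0]
/-- Pauli `σ_y`. -/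
def σy : Matrix (Fin 2) (Fin 2) ℂ := !![0, -Complex.I; Complex.I, 0]

/-- GHZ state `(|0…0⟩ + |1…1⟩)/√2` on `N` qubits. -/
def ghz (N : ℕ) : (Fin N → Fin 2) → ℂ :=
  fun f =>
    ((if ∀ i, f i = 0 then 1 else 0) + (if ∀ i, f i = 1 then 1 else 0)) / Real.sqrt 2

/-- GHZ fidelity `⟨GHZ_N|ρ|GHZ_N⟩` (real part). -/
def fid {N : ℕ} (ρ : Matrix (Fin N → Fin 2) (Fin N → Fin 2) ℂ) : ℝ :=
  (∑ f : Fin N → Fin 2, ∑ g : Fin N → Fin 2,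
    (starRingEnd ℂ) (ghz N f) * ρ f g * ghz N g).re

/-!
Since `σx + iσy = 2|0⟩⟨1|` and `σx - iσy = 2|1⟩⟨0|`, the Mermin operator is
`B_N = 2^(N-1) (|0…0⟩⟨1…1| + |1…1⟩⟨0…0|)`, i.e. `2^(N-1)` times the off-diagonal part of
`2 |GHZ_N⟩⟨GHZ_N|`. Hence `F_N - ⟨B_N⟩/2^N = (ρ_{0…0,0…0} + ρ_{1…1,1…1})/2`, which is
nonnegative because the diagonal of a positive semidefinite matrix is.
-/

theorem sum_sum_star_mul_mul_single_add_single {ι R : Type*} [Fintype ι] [DecidableEq ι]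
    [CommSemiring R] [StarRing R] (ρ : Matrix ι ι R) (a b : ι) :
    ∑ f, ∑ g, starRingEnd R ((Pi.single a 1 + Pi.single b 1 : ι → R) f) * ρ f g
      * (Pi.single a 1 + Pi.single b 1 : ι → R) g = ρ a a + ρ a b + ρ b a + ρ b b := by
  simp only [Pi.add_apply, Pi.single_apply, map_add, MonoidWithZeroHom.map_ite_one_zero,
    add_mul, mul_add, ite_mul, mul_ite, one_mul, zero_mul, mul_one, mul_zero,
    Finset.sum_add_distrib, Finset.sum_ite_eq', Finset.mem_univ, if_true]
  ring

theorem trace_mul_single_add_single {ι R : Type*} [Fintype ι] [DecidableEq ι] [CommSemiring R]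
    (ρ : Matrix ι ι R) (a b : ι) (c : R) :
    (ρ * (single a b c + single b a c)).trace = (ρ a b + ρ b a) * c := by
  rw [Matrix.mul_add, trace_add, trace_mul_single, trace_mul_single]
  simp only [op_smul_eq_mul]
  ring

section GHZ

variable {N : ℕ}

theorem tp_single (p q : Fin N → Fin 2) (c : Fin N → ℂ) :
    tp (fun k => single (p k) (q k) (c k)) = single p q (∏ k, c k) := by
  ext f g
  simp only [tp, of_apply, single_apply, Fintype.prod_ite_zero, funext_iff, forall_and]

theorem σx_add_I_smul_σy : σx + I • σy = single 0 1 2 := by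
  ext a b
  fin_cases a <;> fin_cases b <;> norm_num [σx, σy]

theorem σx_sub_I_smul_σy : σx - I • σy = single 1 0 2 := by
  ext a b
  fin_cases a <;> fin_cases b <;> norm_num [σx, σy]

theorem mermin_eq :
    (1 / 2 : ℂ) • (tp (fun _ : Fin N => σx + I • σy) + tp (fun _ : Fin N => σx - I • σy))
      = single (fun _ => 0) (fun _ => 1) ((2 ^ N / 2 : ℝ) : ℂ)
        + single (fun _ => 1) (fun _ => 0) ((2 ^ N / 2 : ℝ) : ℂ) := by
  rw [σx_add_I_smul_σy, σx_sub_I_smul_σy, tp_single, tp_single]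
  simp [smul_add, smul_single, div_eq_inv_mul]

theorem ghz_apply (f : Fin N → Fin 2) :
    ghz N f = (Pi.single (fun _ => 0) 1 + Pi.single (fun _ => 1) 1 : (Fin N → Fin 2) → ℂ) f / √2 := by
  simp [ghz, Pi.single_apply, funext_iff]

theorem fid_eq (ρ : Matrix (Fin N → Fin 2) (Fin N → Fin 2) ℂ) :
    fid ρ = (ρ (fun _ => 0) (fun _ => 0) + ρ (fun _ => 0) (fun _ => 1)
      + ρ (fun _ => 1) (fun _ => 0) + ρ (fun _ => 1) (fun _ => 1)).re / 2 := by
  have half : ∀ x r y : ℂ, x / √2 * r * (y / √2) = x * r * y / 2 := fun x r y =>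
    calc x / √2 * r * (y / √2) = x * r * y / (√2 * √2 : ℝ) := by push_cast; ring
      _ = x * r * y / 2 := by rw [Real.mul_self_sqrt zero_le_two, ofReal_ofNat]
  simp only [fid, ghz_apply, map_div₀, conj_ofReal, half, ← Finset.sum_div,
    sum_sum_star_mul_mul_single_add_single, div_ofNat_re]

end GHZ

theorem fidelity_ge_mermin_general (N : ℕ)
    (ρ : Matrix (Fin N → Fin 2) (Fin N → Fin 2) ℂ)
    (hpsd : ρ.PosSemidef)
    (B : Matrix (Fin N → Fin 2) (Fin N → Fin 2) ℂ)
    (hB : B = (1 / 2 : ℂ) • (tp (fun _ : Fin N => σx + Complex.I • σy)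
        + tp (fun _ : Fin N => σx - Complex.I • σy))) :
    fid ρ ≥ (Matrix.trace (ρ * B)).re / 2 ^ N := by
  have hmermin : (ρ * B).trace.re / 2 ^ N
      = (ρ (fun _ => 0) (fun _ => 1) + ρ (fun _ => 1) (fun _ => 0)).re / 2 := by
    rw [hB, mermin_eq, trace_mul_single_add_single, re_mul_ofReal]
    field_simp
  have hdiag : ∀ i, 0 ≤ (ρ i i).re := fun i => (nonneg_iff.mp hpsd.diag_nonneg).1
  rw [fid_eq, hmermin, ge_iff_le, div_le_div_iff_of_pos_right two_pos]
  simp only [add_re]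
  linarith [hdiag fun _ => 0, hdiag fun _ => 1]

/-- with all parties measuring `X = σ_x`, `Y = σ_y`, the GHZ fidelity
satisfies `F_N ≥ ⟨B_N⟩/2^N` for any state `ρ`, where
`B_N = [(σ_x + iσ_y)^{⊗N} + (σ_x − iσ_y)^{⊗N}]/2` is the Mermin–Bell operator. -/
theorem fidelity_ge_mermin (N : ℕ) (hN : 0 < N)
    (ρ : Matrix (Fin N → Fin 2) (Fin N → Fin 2) ℂ)
    (hpsd : ρ.PosSemidef) (htr : ρ.trace = 1)
    (B : Matrix (Fin N → Fin 2) (Fin N → Fin 2) ℂ)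
    (hB : B = (1 / 2 : ℂ) • (tp (fun _ : Fin N => σx + Complex.I • σy)
        + tp (fun _ : Fin N => σx - Complex.I • σy))) :
    fid ρ ≥ (Matrix.trace (ρ * B)).re / 2 ^ N :=
  fidelity_ge_mermin_general N ρ hpsd B hB
end
end

section
/- For an odd number N of qubits, with observables X_k = σ_x and Y_k = sin(θ_k)σ_x + cos(θ_k)σ_y on each qubit k, the Mermin–Bell operator B_N = [⊗_k(X_k + iY_k) + ⊗_k(X_k − iY_k)]/2 satisfies Tr(B_N²) = 2^N · 2^{N−1}, independently of the angles θ_1,…,θ_N. -/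
open Complex Matrix BigOperators Real

noncomputable section

lemma tp_mul {N : ℕ} (M M' : Fin N → Matrix (Fin 2) (Fin 2) ℂ) :
    tp M * tp M' = tp (fun k => M k * M' k) := by
  ext f g
  simp only [tp, Matrix.mul_apply, Matrix.of_apply, ← Finset.prod_mul_distrib]
  rw [Finset.prod_univ_sum]
  simp [Fintype.piFinset_univ]

lemma trace_tp {N : ℕ} (M : Fin N → Matrix (Fin 2) (Fin 2) ℂ) :
    Matrix.trace (tp M) = ∏ k, Matrix.trace (M k) := by
  simp only [Matrix.trace, Matrix.diag, tp, Matrix.of_apply]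
  rw [Finset.prod_univ_sum]
  simp [Fintype.piFinset_univ]

lemma trPP (t : ℝ) :
    Matrix.trace ((σx + Complex.I • ((Real.sin t : ℂ) • σx + (Real.cos t : ℂ) • σy))
      * (σx + Complex.I • ((Real.sin t : ℂ) • σx + (Real.cos t : ℂ) • σy)))
      = 4 * Complex.I * Real.sin t := by
  simp [σx, σy, Matrix.trace_fin_two, Matrix.mul_apply, Fin.sum_univ_two]
  linear_combination (2 * (Complex.sin t)^2 + 2*(Complex.cos t)^2 -
    2*(Complex.cos t)^2*Complex.I^2) * Complex.I_sq - 2 * Complex.sin_sq_add_cos_sq (t:ℂ)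

lemma trQQ (t : ℝ) :
    Matrix.trace ((σx - Complex.I • ((Real.sin t : ℂ) • σx + (Real.cos t : ℂ) • σy))
      * (σx - Complex.I • ((Real.sin t : ℂ) • σx + (Real.cos t : ℂ) • σy)))
      = -(4 * Complex.I * Real.sin t) := by
  simp [σx, σy, Matrix.trace_fin_two, Matrix.mul_apply, Fin.sum_univ_two]
  linear_combination (2 * (Complex.sin t)^2 + 2*(Complex.cos t)^2 -
    2*(Complex.cos t)^2*Complex.I^2) * Complex.I_sq - 2 * Complex.sin_sq_add_cos_sq (t:ℂ)

lemma trPQ (t : ℝ) :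
    Matrix.trace ((σx + Complex.I • ((Real.sin t : ℂ) • σx + (Real.cos t : ℂ) • σy))
      * (σx - Complex.I • ((Real.sin t : ℂ) • σx + (Real.cos t : ℂ) • σy)))
      = 4 := by
  simp [σx, σy, Matrix.trace_fin_two, Matrix.mul_apply, Fin.sum_univ_two]
  linear_combination (2*(Complex.cos t)^2*Complex.I^2 - 2*(Complex.cos t)^2 -
    2*(Complex.sin t)^2) * Complex.I_sq + 2 * Complex.sin_sq_add_cos_sq (t:ℂ)

lemma trQP (t : ℝ) :
    Matrix.trace ((σx - Complex.I • ((Real.sin t : ℂ) • σx + (Real.cos t : ℂ) • σy))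
      * (σx + Complex.I • ((Real.sin t : ℂ) • σx + (Real.cos t : ℂ) • σy)))
      = 4 := by
  simp [σx, σy, Matrix.trace_fin_two, Matrix.mul_apply, Fin.sum_univ_two]
  linear_combination (2*(Complex.cos t)^2*Complex.I^2 - 2*(Complex.cos t)^2 -
    2*(Complex.sin t)^2) * Complex.I_sq + 2 * Complex.sin_sq_add_cos_sq (t:ℂ)

/-- for odd `N`, with `X_k = σ_x` and
`Y_k = sin(θ_k)σ_x + cos(θ_k)σ_y`, the Mermin–Bell operator
`B_N = [⊗_k(X_k + iY_k) + ⊗_k(X_k − iY_k)]/2` satisfies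
`Tr(B_N²) = 2^N · 2^{N-1}`, independently of the angles. -/
theorem trace_mermin_sq (N : ℕ) (hodd : Odd N) (θ : Fin N → ℝ)
    (Y : Fin N → Matrix (Fin 2) (Fin 2) ℂ)
    (hY : ∀ k, Y k = (Real.sin (θ k) : ℂ) • σx + (Real.cos (θ k) : ℂ) • σy)
    (B : Matrix (Fin N → Fin 2) (Fin N → Fin 2) ℂ)
    (hB : B = (1 / 2 : ℂ) • (tp (fun k => σx + Complex.I • Y k)
        + tp (fun k => σx - Complex.I • Y k))) :
    Matrix.trace (B * B) = ((2 : ℂ) ^ N * 2 ^ (N - 1)) := by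
  set P := tp (fun k => σx + Complex.I • Y k) with hP
  set Q := tp (fun k => σx - Complex.I • Y k) with hQ
  have expand : B * B = (1/4 : ℂ) • (P * P + P * Q + Q * P + Q * Q) := by
    rw [hB, smul_mul_smul_comm]
    congr 1
    · norm_num
    · noncomm_ring
  have hPk : ∀ k, (σx + Complex.I • Y k)
      = σx + Complex.I • ((Real.sin (θ k) : ℂ) • σx + (Real.cos (θ k) : ℂ) • σy) := by
    intro k; rw [hY k]
  have hQk : ∀ k, (σx - Complex.I • Y k)
      = σx - Complex.I • ((Real.sin (θ k) : ℂ) • σx + (Real.cos (θ k) : ℂ) • σy) := by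
    intro k; rw [hY k]
  have tPP : Matrix.trace (P * P) = ∏ k, (4 * Complex.I * Real.sin (θ k)) := by
    rw [hP, tp_mul, trace_tp]
    exact Finset.prod_congr rfl fun k _ => by rw [hPk k]; exact trPP (θ k)
  have tQQ : Matrix.trace (Q * Q) = ∏ k, -(4 * Complex.I * Real.sin (θ k)) := by
    rw [hQ, tp_mul, trace_tp]
    exact Finset.prod_congr rfl fun k _ => by rw [hQk k]; exact trQQ (θ k)
  have keyPQ : ∀ k, Matrix.trace ((σx + Complex.I • Y k) * (σx - Complex.I • Y k)) = (4:ℂ) := by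
    intro k; rw [hY k]; exact trPQ (θ k)
  have keyQP : ∀ k, Matrix.trace ((σx - Complex.I • Y k) * (σx + Complex.I • Y k)) = (4:ℂ) := by
    intro k; rw [hY k]; exact trQP (θ k)
  have tPQ : Matrix.trace (P * Q) = 4 ^ N := by
    rw [hP, hQ, tp_mul, trace_tp]
    rw [Finset.prod_congr rfl fun k _ => keyPQ k]
    simp
  have tQP : Matrix.trace (Q * P) = 4 ^ N := by
    rw [hP, hQ, tp_mul, trace_tp]
    rw [Finset.prod_congr rfl fun k _ => keyQP k]
    simp
  have hneg : (∏ k, -(4 * Complex.I * Real.sin (θ k)))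
      = -(∏ k, (4 * Complex.I * Real.sin (θ k))) := by
    rw [show (fun k => -(4 * Complex.I * (Real.sin (θ k) : ℂ)))
      = fun k => (-1) * (4 * Complex.I * Real.sin (θ k)) by funext k; ring]
    rw [Finset.prod_mul_distrib, Finset.prod_const]
    simp [hodd.neg_one_pow]
  have hpos : 0 < N := hodd.pos
  have h2 : (2 : ℂ) ^ N = 2 ^ (N - 1) * 2 := by
    conv_lhs => rw [show N = (N - 1) + 1 from (Nat.succ_pred_eq_of_pos hpos).symm]
    rw [pow_succ]
  have h4 : (4 : ℂ) ^ N = 2 ^ N * (2 ^ (N - 1) * 2) := by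
    rw [show (4:ℂ) = 2 * 2 by norm_num, mul_pow, h2]
  set x := ∏ k, (4 * Complex.I * (Real.sin (θ k) : ℂ)) with hx
  rw [expand, Matrix.trace_smul, Matrix.trace_add, Matrix.trace_add, Matrix.trace_add,
    tPP, tQQ, tPQ, tQP, hneg, smul_eq_mul, h4]
  ring
end
end

section
/- Hoeffding bound for the fidelity estimator: let the estimator be F̂ = Σ_{i=0}^{N} (a_i / (2 m_i)) Σ_{j=1}^{m_i} A_{ij}, where the A_{ij} are independent random variables with A_{ij} ∈ {−1, +1} for i < N and A_{Nj} ∈ {0,1}, a_N = 1, Σ_{i<N} a_i² ≤ 2/N, and m_i ≥ μ for all i. Then E[F̂] = F and Pr[F̂ − F > ε] ≤ exp(−8με² / (1 + 8/N)). -/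
open MeasureTheory ProbabilityTheory BigOperators
open scoped ProbabilityTheory

section Helpers

open Real


lemma key_ineq (p u : ℝ) (hp0 : 0 ≤ p) (hp1 : p ≤ 1) :
    (1 - p) * Real.exp (-(p * u)) + p * Real.exp ((1 - p) * u) ≤ Real.exp (u ^ 2 / 8) := by
  set D : ℝ → ℝ := fun x => 1 - p + p * Real.exp x with hDdef
  have hD : ∀ x, 0 < D x := by
    intro x
    rcases hp0.eq_or_lt with h | h
    · simp [hDdef, ← h]
    · have h1 : 0 < p * Real.exp x := by positivity
      simp only [hDdef]; linarith
  set h' : ℝ → ℝ := fun x => x / 4 + p - p * Real.exp x / D x with hh'def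
  set h : ℝ → ℝ := fun x => x ^ 2 / 8 + p * x - Real.log (D x) with hhdef
  have hDD : ∀ x, HasDerivAt D (p * Real.exp x) x := by
    intro x
    exact ((Real.hasDerivAt_exp x).const_mul p).const_add (1 - p)
  have hder : ∀ x, HasDerivAt h (h' x) x := by
    intro x
    have h1 : HasDerivAt (fun x : ℝ => x ^ 2 / 8 + p * x) (x / 4 + p) x := by
      have := ((hasDerivAt_pow 2 x).div_const 8).add ((hasDerivAt_id x).const_mul p)
      exact this.congr_deriv (by ring)
    have h2 : HasDerivAt (fun x => Real.log (D x)) (p * Real.exp x / D x) x :=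
      (hDD x).log (hD x).ne'
    exact h1.sub h2
  have hder' : ∀ x, HasDerivAt h'
      (1 / 4 - (p * Real.exp x * D x - p * Real.exp x * (p * Real.exp x)) / (D x) ^ 2) x := by
    intro x
    have h1 : HasDerivAt (fun x : ℝ => x / 4 + p) (1 / 4) x := by
      simpa using ((hasDerivAt_id x).div_const 4).add_const p
    have h2 : HasDerivAt (fun x => p * Real.exp x / D x)
        ((p * Real.exp x * D x - p * Real.exp x * (p * Real.exp x)) / (D x) ^ 2) x :=
      ((Real.hasDerivAt_exp x).const_mul p).div (hDD x) (hD x).ne'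
    exact h1.sub h2
  have hmono' : Monotone h' := by
    refine monotone_of_deriv_nonneg (fun x => (hder' x).differentiableAt) ?_
    intro x
    rw [(hder' x).deriv]
    have hDx := hD x
    rw [sub_nonneg, div_le_iff₀ (by positivity)]
    obtain ⟨e, he⟩ : ∃ e, p * Real.exp x = e := ⟨_, rfl⟩
    obtain ⟨y, hy⟩ : ∃ y, D x = y := ⟨_, rfl⟩
    rw [he, hy]
    nlinarith [sq_nonneg (y - 2 * e)]
  have hD0 : D 0 = 1 := by simp [hDdef]
  have h'0 : h' 0 = 0 := by simp [hh'def, hD0]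
  have h0 : h 0 = 0 := by simp [hhdef, hD0]
  have hdiff : Differentiable ℝ h := fun x => (hder x).differentiableAt
  have hnonneg : ∀ x, 0 ≤ h x := by
    intro x
    rcases le_total 0 x with hx | hx
    · have hmOn : MonotoneOn h (Set.Ici 0) := by
        refine monotoneOn_of_deriv_nonneg (convex_Ici 0) hdiff.continuous.continuousOn
          (fun y _ => (hdiff y).differentiableWithinAt) ?_
        intro y hy
        rw [interior_Ici] at hy
        rw [(hder y).deriv]
        have := hmono' (le_of_lt hy)
        rw [h'0] at this
        exact this
      have := hmOn (Set.self_mem_Ici) (Set.mem_Ici.mpr hx) hx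
      rwa [h0] at this
    · have hmOn : AntitoneOn h (Set.Iic 0) := by
        refine antitoneOn_of_deriv_nonpos (convex_Iic 0) hdiff.continuous.continuousOn
          (fun y _ => (hdiff y).differentiableWithinAt) ?_
        intro y hy
        rw [interior_Iic] at hy
        rw [(hder y).deriv]
        have := hmono' (le_of_lt hy)
        rwa [h'0] at this
      have := hmOn (Set.mem_Iic.mpr hx) Set.self_mem_Iic hx
      rwa [h0] at this
  -- conclude
  have hlog : Real.log (D u) ≤ u ^ 2 / 8 + p * u := by
    have := hnonneg u
    simp only [hhdef] at this
    linarith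
  have hDle : D u ≤ Real.exp (u ^ 2 / 8 + p * u) := by
    calc D u = Real.exp (Real.log (D u)) := (Real.exp_log (hD u)).symm
    _ ≤ _ := Real.exp_le_exp.mpr hlog
  calc (1 - p) * Real.exp (-(p * u)) + p * Real.exp ((1 - p) * u)
      = Real.exp (-(p * u)) * D u := by
        simp only [hDdef]
        rw [show (1 - p) * u = -(p * u) + u by ring, Real.exp_add]
        ring
    _ ≤ Real.exp (-(p * u)) * Real.exp (u ^ 2 / 8 + p * u) := by
        exact mul_le_mul_of_nonneg_left hDle (Real.exp_pos _).le
    _ = Real.exp (u ^ 2 / 8) := by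
        rw [← Real.exp_add]
        congr 1
        ring


lemma twoval_repr {Ω : Type*} [MeasureSpace Ω] [IsProbabilityMeasure (ℙ : Measure Ω)]
    {X : Ω → ℝ} (hX : Measurable X) {c d : ℝ} (h : ∀ ω, X ω = c ∨ X ω = d) (g : ℝ → ℝ) :
    Integrable (fun ω => g (X ω)) ℙ ∧
    ∫ ω, g (X ω) = (1 - (ℙ (X ⁻¹' {d})).toReal) * g c
      + (ℙ (X ⁻¹' {d})).toReal * g d := by
  set S := X ⁻¹' {d} with hSdef
  have hS : MeasurableSet S := hX (measurableSet_singleton d)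
  have hfun : (fun ω => g (X ω)) =
      fun ω => S.indicator (fun _ => g d) ω + Sᶜ.indicator (fun _ => g c) ω := by
    funext ω
    by_cases hω : X ω = d
    · have hωS : ω ∈ S := hω
      rw [Set.indicator_of_mem hωS, Set.indicator_of_notMem (by simpa using hωS), hω]
      simp
    · have hωS : ω ∉ S := hω
      have hc : X ω = c := (h ω).resolve_right hω
      rw [Set.indicator_of_notMem hωS, Set.indicator_of_mem (Set.mem_compl hωS), hc]
      simp
  have hi1 : Integrable (S.indicator (fun _ => g d)) ℙ := (integrable_const (g d)).indicator hS
  have hi2 : Integrable (Sᶜ.indicator (fun _ => g c)) ℙ :=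
    (integrable_const (g c)).indicator hS.compl
  have hint : Integrable (fun ω => g (X ω)) ℙ := by
    rw [hfun]; exact hi1.add hi2
  refine ⟨hint, ?_⟩
  rw [hfun, integral_add hi1 hi2, integral_indicator_const _ hS,
    integral_indicator_const _ hS.compl]
  have hcompl : (ℙ Sᶜ).toReal = 1 - (ℙ S).toReal := by
    rw [measure_compl hS (measure_ne_top _ _), measure_univ,
      ENNReal.toReal_sub_of_le prob_le_one (by simp)]
    simp
  rw [measureReal_def, measureReal_def, hcompl]
  simp only [smul_eq_mul]
  ring

lemma mgf_twoval {Ω : Type*} [MeasureSpace Ω] [IsProbabilityMeasure (ℙ : Measure Ω)]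
    {X : Ω → ℝ} (hX : Measurable X) {c d : ℝ} (h : ∀ ω, X ω = c ∨ X ω = d) (t : ℝ) :
    mgf (fun ω => X ω - ∫ ω, X ω) ℙ t ≤ Real.exp (t ^ 2 * (d - c) ^ 2 / 8) := by
  set p := (ℙ (X ⁻¹' {d})).toReal with hp
  have hp0 : 0 ≤ p := ENNReal.toReal_nonneg
  have hp1 : p ≤ 1 := by
    rw [hp, ← ENNReal.toReal_one]
    exact ENNReal.toReal_mono (by simp) prob_le_one
  have hm := (twoval_repr hX h id).2
  set m := ∫ ω, X ω with hmdef
  have hmval : m = (1 - p) * c + p * d := by simpa using hm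
  have hrepr := (twoval_repr hX h (fun x => Real.exp (t * (x - m)))).2
  have hmgf : mgf (fun ω => X ω - m) ℙ t = ∫ ω, Real.exp (t * (X ω - m)) := rfl
  rw [hmgf, hrepr]
  have h1 : t * (c - m) = -(p * (t * (d - c))) := by rw [hmval]; ring
  have h2 : t * (d - m) = (1 - p) * (t * (d - c)) := by rw [hmval]; ring
  rw [h1, h2]
  calc (1 - p) * Real.exp (-(p * (t * (d - c)))) + p * Real.exp ((1 - p) * (t * (d - c)))
      ≤ Real.exp ((t * (d - c)) ^ 2 / 8) := key_ineq p (t * (d - c)) hp0 hp1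
    _ = _ := by congr 1; ring

end Helpers

/-- Hoeffding bound for the fidelity estimator
`F̂ = ∑_{i=0}^{N} (a_i/(2 m_i)) ∑_{j<m_i} A_{ij}` built from independent random
variables `A_{ij}` with values in `{−1,+1}` for `i < N` and in `{0,1}` for `i = N`,
with `a_N = 1`, `∑_{i<N} a_i² ≤ 2/N` and `m_i ≥ μ`. Then `E[F̂] = F` and
`Pr[F̂ − F > ε] ≤ exp(−8με²/(1 + 8/N))`. -/
theorem fidelity_hoeffding {Ω : Type*} [MeasureSpace Ω]
    [IsProbabilityMeasure (ℙ : Measure Ω)]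
    (N : ℕ) (hN : 0 < N)
    (m : Fin (N + 1) → ℕ) (μ : ℕ) (hμ : 0 < μ) (hm : ∀ i, μ ≤ m i)
    (a : Fin (N + 1) → ℝ)
    (haN : a (Fin.last N) = 1)
    (ha : ∑ i : Fin N, (a i.castSucc) ^ 2 ≤ 2 / (N : ℝ))
    (A : (Σ i : Fin (N + 1), Fin (m i)) → Ω → ℝ)
    (hmeas : ∀ p, Measurable (A p))
    (hindep : iIndepFun A ℙ)
    (hpm : ∀ (i : Fin (N + 1)), (i : ℕ) < N → ∀ (j : Fin (m i)) (ω : Ω),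
      A ⟨i, j⟩ ω = -1 ∨ A ⟨i, j⟩ ω = 1)
    (h01 : ∀ (j : Fin (m (Fin.last N))) (ω : Ω),
      A ⟨Fin.last N, j⟩ ω = 0 ∨ A ⟨Fin.last N, j⟩ ω = 1)
    (Fhat : Ω → ℝ)
    (hFhat : Fhat = fun ω => ∑ i : Fin (N + 1),
      (a i / (2 * (m i : ℝ))) * ∑ j : Fin (m i), A ⟨i, j⟩ ω)
    (F : ℝ)
    (hF : F = ∑ i : Fin (N + 1),
      (a i / (2 * (m i : ℝ))) * ∑ j : Fin (m i), ∫ ω, A ⟨i, j⟩ ω)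
    (ε : ℝ) (hε : 0 < ε) :
    (∫ ω, Fhat ω) = F ∧
    (ℙ {ω | Fhat ω - F > ε}).toReal
      ≤ Real.exp (-(8 * (μ : ℝ) * ε ^ 2) / (1 + 8 / (N : ℝ))) := by
  -- basic positivity facts
  have hNR : (0 : ℝ) < N := Nat.cast_pos.mpr hN
  have hμR : (0 : ℝ) < μ := Nat.cast_pos.mpr hμ
  have hmpos : ∀ i, 0 < m i := fun i => lt_of_lt_of_le hμ (hm i)
  have hmR : ∀ i, (0 : ℝ) < m i := fun i => Nat.cast_pos.mpr (hmpos i)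
  set k : Fin (N + 1) → ℝ := fun i => a i / (2 * (m i : ℝ)) with hk
  set Y : (Σ i : Fin (N + 1), Fin (m i)) → Ω → ℝ := fun p ω => k p.1 * A p ω with hY
  set cc : (Σ i : Fin (N + 1), Fin (m i)) → ℝ :=
    fun p => if (p.1 : ℕ) < N then -(k p.1) else 0 with hcc
  set dd : (Σ i : Fin (N + 1), Fin (m i)) → ℝ := fun p => k p.1 with hdd
  have hlast : ∀ i : Fin (N + 1), ¬ ((i : ℕ) < N) → i = Fin.last N := by
    intro i hi
    have h1 := i.isLt
    exact Fin.ext (by simp only [Fin.val_last]; omega)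
  have hYvals : ∀ p, ∀ ω, Y p ω = cc p ∨ Y p ω = dd p := by
    rintro ⟨i, j⟩ ω
    simp only [hY, hcc, hdd]
    by_cases hi : (i : ℕ) < N
    · rw [if_pos hi]
      rcases hpm i hi j ω with h | h <;> rw [h]
      · left; ring
      · right; ring
    · rw [if_neg hi]
      have hiN := hlast i hi
      subst hiN
      rcases h01 j ω with h | h <;> rw [h]
      · left; ring
      · right; ring
  have hYmeas : ∀ p, Measurable (Y p) := fun p => (hmeas p).const_mul _
  set mY : (Σ i : Fin (N + 1), Fin (m i)) → ℝ := fun p => ∫ ω, Y p ω with hmY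
  set Z : (Σ i : Fin (N + 1), Fin (m i)) → Ω → ℝ := fun p ω => Y p ω - mY p with hZ
  have hZmeas : ∀ p, Measurable (Z p) := fun p => (hYmeas p).sub measurable_const
  have hYint : ∀ p, Integrable (Y p) ℙ := by
    intro p
    have := (twoval_repr (hYmeas p) (hYvals p) id).1
    simpa using this
  -- sum over sigma type
  have hsum : ∀ g : (Σ i : Fin (N + 1), Fin (m i)) → ℝ,
      (∑ i : Fin (N + 1), ∑ j : Fin (m i), g ⟨i, j⟩) = ∑ p, g p := by
    intro g
    rw [← Finset.univ_sigma_univ, Finset.sum_sigma]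
  have hFhat' : ∀ ω, Fhat ω = ∑ p, Y p ω := by
    intro ω
    rw [hFhat]
    simp only
    rw [← hsum (fun p => Y p ω)]
    refine Finset.sum_congr rfl fun i _ => ?_
    rw [Finset.mul_sum]
  have hFeq : F = ∑ p, mY p := by
    rw [hF, ← hsum mY]
    refine Finset.sum_congr rfl fun i _ => ?_
    rw [Finset.mul_sum]
    refine Finset.sum_congr rfl fun j _ => ?_
    simp only [hmY, hY]
    rw [integral_const_mul]
  have part1 : (∫ ω, Fhat ω) = F := by
    have : (∫ ω, Fhat ω) = ∫ ω, ∑ p, Y p ω := by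
      congr 1; funext ω; exact hFhat' ω
    rw [this, integral_finset_sum _ (fun p _ => hYint p), hFeq]
  refine ⟨part1, ?_⟩
  -- widths
  set W : ℝ := ∑ p, (dd p - cc p) ^ 2 with hW
  have hWnonneg : ∀ p : (Σ i : Fin (N + 1), Fin (m i)), (0:ℝ) ≤ (dd p - cc p) ^ 2 :=
    fun p => sq_nonneg _
  have hklast : k (Fin.last N) = 1 / (2 * (m (Fin.last N) : ℝ)) := by
    simp only [hk, haN]
  have hWpos : 0 < W := by
    have hp0 : (0 : ℕ) < m (Fin.last N) := hmpos _
    set p0 : (Σ i : Fin (N + 1), Fin (m i)) := ⟨Fin.last N, ⟨0, hp0⟩⟩ with hp0def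
    have hterm : (0:ℝ) < (dd p0 - cc p0) ^ 2 := by
      simp only [hcc, hdd, hp0def]
      rw [if_neg (by simp [Fin.last])]
      have : k (Fin.last N) ≠ 0 := by
        rw [hklast]
        positivity
      simpa using pow_pos (by positivity : (0:ℝ) < |k (Fin.last N)|) 2 |>.trans_le (by
        rw [sq_abs])
    calc (0:ℝ) < (dd p0 - cc p0) ^ 2 := hterm
      _ ≤ W := Finset.single_le_sum (fun p _ => hWnonneg p) (Finset.mem_univ p0)
  have hterm : ∀ (i : Fin (N + 1)) (j : Fin (m i)), (dd ⟨i, j⟩ - cc ⟨i, j⟩) ^ 2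
      = if (i : ℕ) < N then 4 * (k i) ^ 2 else (k i) ^ 2 := by
    intro i j
    simp only [hcc, hdd]
    split_ifs with h
    · ring
    · ring
  have hWsum : W = ∑ i : Fin (N + 1),
      (m i : ℝ) * (if (i : ℕ) < N then 4 * (k i) ^ 2 else (k i) ^ 2) := by
    rw [hW, ← hsum (fun p => (dd p - cc p) ^ 2)]
    refine Finset.sum_congr rfl fun i _ => ?_
    rw [Finset.sum_congr rfl (fun j _ => hterm i j), Finset.sum_const, Finset.card_univ,
      Fintype.card_fin, nsmul_eq_mul]
  have hA : ∀ i : Fin N, (m i.castSucc : ℝ) *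
      (if ((i.castSucc : Fin (N + 1)) : ℕ) < N then 4 * (k i.castSucc) ^ 2
        else (k i.castSucc) ^ 2) ≤ (a i.castSucc) ^ 2 / (μ : ℝ) := by
    intro i
    rw [if_pos (by simpa using i.isLt)]
    have hmi := hmR i.castSucc
    have heq : (m i.castSucc : ℝ) * (4 * (k i.castSucc) ^ 2)
        = (a i.castSucc) ^ 2 / (m i.castSucc : ℝ) := by
      simp only [hk]
      field_simp
      ring
    rw [heq]
    gcongr
    exact_mod_cast hm i.castSucc
  have hB : (m (Fin.last N) : ℝ) *
      (if ((Fin.last N : Fin (N + 1)) : ℕ) < N then 4 * (k (Fin.last N)) ^ 2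
        else (k (Fin.last N)) ^ 2) ≤ 1 / (4 * (μ : ℝ)) := by
    rw [if_neg (by simp)]
    have hmN := hmR (Fin.last N)
    have heq : (m (Fin.last N) : ℝ) * (k (Fin.last N)) ^ 2
        = 1 / (4 * (m (Fin.last N) : ℝ)) := by
      rw [hklast]
      field_simp
      ring
    rw [heq]
    gcongr
    exact_mod_cast hm (Fin.last N)
  have hWle : W ≤ 2 / ((N : ℝ) * μ) + 1 / (4 * μ) := by
    rw [hWsum, Fin.sum_univ_castSucc]
    have h1 : ∑ i : Fin N, (m i.castSucc : ℝ) *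
        (if ((i.castSucc : Fin (N + 1)) : ℕ) < N then 4 * (k i.castSucc) ^ 2
          else (k i.castSucc) ^ 2) ≤ 2 / ((N : ℝ) * μ) := by
      calc _ ≤ ∑ i : Fin N, (a i.castSucc) ^ 2 / (μ : ℝ) :=
            Finset.sum_le_sum fun i _ => hA i
        _ = (∑ i : Fin N, (a i.castSucc) ^ 2) / (μ : ℝ) := by rw [Finset.sum_div]
        _ ≤ (2 / (N : ℝ)) / (μ : ℝ) := by gcongr
        _ = 2 / ((N : ℝ) * μ) := by rw [div_div]
    linarith [hB]
  -- independence of the centered variables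
  have hindepZ : iIndepFun Z ℙ := by
    have h := hindep.comp (fun p (x : ℝ) => k p.1 * x - mY p)
      (fun p => (measurable_id.const_mul (k p.1)).sub_const (mY p))
    exact h
  set t : ℝ := 4 * ε / W with ht
  have ht0 : 0 < t := div_pos (by positivity) hWpos
  have hZint : ∀ p, Integrable (fun ω => Real.exp (t * Z p ω)) ℙ := by
    intro p
    have := (twoval_repr (hYmeas p) (hYvals p) (fun x => Real.exp (t * (x - mY p)))).1
    simpa [hZ] using this
  have hSint : Integrable (fun ω => Real.exp (t * (∑ p, Z p) ω)) ℙ :=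
    hindepZ.integrable_exp_mul_sum hZmeas (fun p _ => hZint p)
  have hmgf_bound : mgf (∑ p, Z p) ℙ t ≤ Real.exp (t ^ 2 * W / 8) := by
    rw [hindepZ.mgf_sum hZmeas Finset.univ]
    calc (∏ p, mgf (Z p) ℙ t) ≤ ∏ p, Real.exp (t ^ 2 * (dd p - cc p) ^ 2 / 8) := by
          refine Finset.prod_le_prod (fun p _ => mgf_nonneg) (fun p _ => ?_)
          have := mgf_twoval (hYmeas p) (hYvals p) t
          simpa [hZ, hmY] using this
      _ = Real.exp (∑ p, t ^ 2 * (dd p - cc p) ^ 2 / 8) := by rw [Real.exp_sum]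
      _ = Real.exp (t ^ 2 * W / 8) := by
          congr 1
          rw [hW, Finset.mul_sum, Finset.sum_div]
  have hsub : {ω | Fhat ω - F > ε} ⊆ {ω | ε ≤ (∑ p, Z p) ω} := by
    intro ω hω
    simp only [Set.mem_setOf_eq] at *
    have hdiff : Fhat ω - F = (∑ p, Z p) ω := by
      rw [Finset.sum_apply, hFhat' ω, hFeq, ← Finset.sum_sub_distrib]
    linarith
  have hW0 : W ≠ 0 := ne_of_gt hWpos
  calc (ℙ {ω | Fhat ω - F > ε}).toReal
      ≤ (ℙ {ω | ε ≤ (∑ p, Z p) ω}).toReal :=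
        ENNReal.toReal_mono (measure_ne_top _ _) (measure_mono hsub)
    _ ≤ Real.exp (-t * ε) * mgf (∑ p, Z p) ℙ t :=
        measure_ge_le_exp_mul_mgf ε ht0.le hSint
    _ ≤ Real.exp (-t * ε) * Real.exp (t ^ 2 * W / 8) :=
        mul_le_mul_of_nonneg_left hmgf_bound (Real.exp_pos _).le
    _ = Real.exp (-t * ε + t ^ 2 * W / 8) := (Real.exp_add _ _).symm
    _ = Real.exp (-(2 * ε ^ 2 / W)) := by
        congr 1
        rw [ht]
        field_simp
        ring
    _ ≤ Real.exp (-(8 * (μ : ℝ) * ε ^ 2) / (1 + 8 / (N : ℝ))) := by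
        apply Real.exp_le_exp.mpr
        have hden : (0 : ℝ) < 1 + 8 / N := by positivity
        have hden2 : (0 : ℝ) < 2 / ((N : ℝ) * μ) + 1 / (4 * μ) := by positivity
        have h1 : 2 * ε ^ 2 / (2 / ((N : ℝ) * μ) + 1 / (4 * μ)) ≤ 2 * ε ^ 2 / W := by
          gcongr
        have h2 : 8 * (μ : ℝ) * ε ^ 2 / (1 + 8 / N)
            = 2 * ε ^ 2 / (2 / ((N : ℝ) * μ) + 1 / (4 * μ)) := by
          rw [div_eq_div_iff hden.ne' hden2.ne']
          field_simp
          ring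
        rw [neg_div]
        rw [h2]
        linarith
end
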